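/- arXiv:math/0501262 — 3 statements merged into one kernel-verified Lean document; each statement's English description precedes it below -/
import Mathlib

section
/- Let X be a compact metric space, A a unital C*-algebra with tracial states, and φ : C(X) → A a unital *-homomorphism. Let G ⊆ X be an open set such that the boundary measure μ_τ(closure(G) \ G) = 0 for every tracial state τ of A, where μ_τ is the Borel measure on X induced by τ∘φ. Then for every ε > 0 there exists f ∈ C(X) with 0 ≤ f ≤ 1, f vanishing on X \ G, such that |τ(φ(f)) − μ_τ(G)| < ε for all τ ∈ T(A). -/
open MeasureTheory

/-- A tracial state on a unital C*-algebra. -/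
def IsTracialState {A : Type*} [NormedRing A] [StarRing A] [NormedAlgebra ℂ A]
    (τ : A →L[ℂ] ℂ) : Prop :=
  τ 1 = 1 ∧ (∀ a : A, 0 ≤ (τ (star a * a)).re ∧ (τ (star a * a)).im = 0) ∧
    ∀ x y : A, τ (x * y) = τ (y * x)

/-!
For an open set `U`, the functions `min 1 (n · d(x, Uᶜ))` increase pointwise to the indicator of
`U`. Taking `g_n` for `U = G` and `h_n` for `U = X \ closure G`, dominated convergence and
`μ_τ(closure G \ G) = 0` give `τ(φ(g_n + h_n)) → μ_τ(G) + μ_τ(X \ closure G) = 1` for every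
tracial state `τ`. Tracial states are positive, hence of norm at most `4`, so they form a weak-*
compact set, on which Dini's theorem makes the convergence uniform. Since `τ(φ(g_n)) ≤ μ_τ(G)` and
`τ(φ(h_n)) ≤ μ_τ(X \ closure G)`, a single `g_N` then approximates `μ_τ(G)` for all `τ` at once.
-/

open scoped ComplexOrder

namespace IsTracialState

variable {A : Type*} [CStarAlgebra A] [PartialOrder A] [StarOrderedRing A]
  {τ : A →L[ℂ] ℂ}

lemma apply_nonneg (hτ : IsTracialState τ) {a : A} (ha : 0 ≤ a) : 0 ≤ τ a := by
  rw [StarOrderedRing.nonneg_iff] at ha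
  induction ha using AddSubmonoid.closure_induction with
  | mem x hx =>
    obtain ⟨s, rfl⟩ := hx
    exact Complex.nonneg_iff.mpr ⟨(hτ.2.1 s).1, (hτ.2.1 s).2.symm⟩
  | zero => simp
  | add x y _ _ hx hy => simpa using add_nonneg hx hy

lemma norm_apply_le_of_nonneg (hτ : IsTracialState τ) {a : A} (ha : 0 ≤ a) : ‖τ a‖ ≤ ‖a‖ := by
  have h : ‖τ a‖ ≤ ‖τ 1‖ * ‖a‖ :=
    (PositiveLinearMap.mk₀ (τ : A →ₗ[ℂ] ℂ) fun _ => hτ.apply_nonneg).norm_apply_le_of_nonneg a ha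
  simpa [hτ.1] using h

lemma norm_apply_le (hτ : IsTracialState τ) (a : A) : ‖τ a‖ ≤ 4 * ‖a‖ := by
  obtain ⟨x, hx_nonneg, hx_norm, ha⟩ := CStarAlgebra.exists_sum_four_nonneg a
  calc ‖τ a‖ = ‖∑ i : Fin 4, Complex.I ^ (i : ℕ) * τ (x i)‖ := by
        rw [ha, map_sum]; simp only [map_smul, smul_eq_mul]
    _ ≤ ∑ i : Fin 4, ‖τ (x i)‖ := by
        refine (norm_sum_le _ _).trans_eq ?_
        simp
    _ ≤ ∑ _i : Fin 4, ‖a‖ :=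
        Finset.sum_le_sum fun i _ => (hτ.norm_apply_le_of_nonneg (hx_nonneg i)).trans (hx_norm i)
    _ = 4 * ‖a‖ := by simp

end IsTracialState

lemma isClosed_setOf_isTracialState {A : Type*} [NormedRing A] [StarRing A] [NormedAlgebra ℂ A] :
    IsClosed {τ : WeakDual ℂ A | IsTracialState (WeakDual.toStrongDual τ)} := by
  simp only [IsTracialState, Set.ofPred_and, Set.ofPred_forall]
  have heval (a : A) : Continuous fun τ : WeakDual ℂ A => τ a := WeakDual.eval_continuous a
  refine (isClosed_eq (heval 1) continuous_const).inter
    ((isClosed_iInter fun a => ?_).inter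
      (isClosed_iInter fun x => isClosed_iInter fun y => isClosed_eq (heval _) (heval _)))
  exact (isClosed_le continuous_const (Complex.continuous_re.comp (heval _))).inter
    (isClosed_eq (Complex.continuous_im.comp (heval _)) continuous_const)

lemma isCompact_setOf_isTracialState {A : Type*} [CStarAlgebra A] [PartialOrder A]
    [StarOrderedRing A] :
    IsCompact {τ : WeakDual ℂ A | IsTracialState (WeakDual.toStrongDual τ)} :=
  (WeakDual.isCompact_closedBall (0 : StrongDual ℂ A) 4).of_isClosed_subset
    isClosed_setOf_isTracialState fun τ hτ => by
      simpa using ContinuousLinearMap.opNorm_le_bound _ (by norm_num) hτ.norm_apply_le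

open Filter Topology in
lemma exists_forall_isTracialState_lt_re_apply {A : Type*} [CStarAlgebra A] [PartialOrder A]
    [StarOrderedRing A] (a : ℕ → A) {c : ℝ}
    (hmono : ∀ τ : A →L[ℂ] ℂ, IsTracialState τ → Monotone fun n => (τ (a n)).re)
    (hlim : ∀ τ : A →L[ℂ] ℂ, IsTracialState τ → Tendsto (fun n => (τ (a n)).re) atTop (𝓝 c))
    {ε : ℝ} (hε : 0 < ε) :
    ∃ N, ∀ τ : A →L[ℂ] ℂ, IsTracialState τ → c - ε < (τ (a N)).re := by
  have hunif : TendstoUniformlyOn (fun n (τ : WeakDual ℂ A) => (τ (a n)).re) (fun _ => c) atTop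
      {τ | IsTracialState (WeakDual.toStrongDual τ)} :=
    Monotone.tendstoUniformlyOn_of_forall_tendsto isCompact_setOf_isTracialState
      (fun n => (Complex.continuous_re.comp (WeakDual.eval_continuous _)).continuousOn)
      (fun τ hτ => hmono _ hτ) continuousOn_const (fun τ hτ => hlim _ hτ)
  obtain ⟨N, hN⟩ := (Metric.tendstoUniformlyOn_iff.mp hunif ε hε).exists
  refine ⟨N, fun τ hτ => ?_⟩
  have hτN : dist c (τ (a N)).re < ε := hN (StrongDual.toWeakDual τ) hτ
  rw [Real.dist_eq, abs_lt] at hτN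
  linarith [hτN.2]

section OpenApprox

variable {X : Type*} [PseudoEMetricSpace X]

open Metric ENNReal Filter Topology

/-- `x ↦ min 1 (n · d(x, Uᶜ))`. The extended distance is used because `d(x, ∅) = ∞`: this makes
`openApprox univ` tend to `1` as well, so no case split on `U = univ` is needed. -/
noncomputable def openApprox (U : Set X) (n : ℕ) : C(X, ℝ) :=
  ⟨fun x => truncateToReal 1 (n * infEDist x Uᶜ),
    (continuous_truncateToReal one_ne_top).comp
      ((ENNReal.continuous_const_mul (natCast_ne_top n)).comp continuous_infEDist)⟩

variable {U : Set X}

lemma openApprox_apply (n : ℕ) (x : X) :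
    openApprox U n x = truncateToReal 1 (n * infEDist x Uᶜ) := rfl

lemma openApprox_nonneg (n : ℕ) (x : X) : 0 ≤ openApprox U n x := truncateToReal_nonneg

lemma openApprox_le_one (n : ℕ) (x : X) : openApprox U n x ≤ 1 := by
  simpa [openApprox_apply] using truncateToReal_le one_ne_top

lemma openApprox_eq_zero_of_notMem {x : X} (hx : x ∉ U) (n : ℕ) : openApprox U n x = 0 := by
  simp [openApprox_apply, infEDist_zero_of_mem (Set.mem_compl hx), truncateToReal]

lemma openApprox_le_indicator (n : ℕ) (x : X) : openApprox U n x ≤ U.indicator 1 x := by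
  by_cases hx : x ∈ U
  · simpa [hx] using openApprox_le_one n x
  · simp [hx, openApprox_eq_zero_of_notMem hx]

lemma monotone_openApprox (U : Set X) : Monotone (openApprox U) := fun m n hmn x =>
  monotone_truncateToReal one_ne_top (by gcongr)

lemma tendsto_openApprox (hU : IsOpen U) (x : X) :
    Tendsto (openApprox U · x) atTop (𝓝 (U.indicator 1 x)) := by
  by_cases hx : x ∈ U
  · have hpos : infEDist x Uᶜ ≠ 0 := by
      rw [← pos_iff_ne_zero, infEDist_pos_iff_notMem_closure, hU.isClosed_compl.closure_eq]
      exact not_not.mpr hx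
    obtain ⟨N, hN⟩ := exists_nat_mul_gt hpos one_ne_top
    refine tendsto_const_nhds.congr' ?_
    filter_upwards [eventually_ge_atTop N] with n hn
    have : 1 ≤ (n : ℝ≥0∞) * infEDist x Uᶜ := hN.le.trans (by gcongr)
    simp [hx, openApprox_apply, truncateToReal, min_eq_left this]
  · simp [hx, openApprox_eq_zero_of_notMem hx]

end OpenApprox

section Measure

variable {X : Type*} [PseudoEMetricSpace X] [MeasurableSpace X] [OpensMeasurableSpace X]
  {μ : Measure X} {U : Set X}

open Filter Topology

lemma integrable_openApprox [IsFiniteMeasure μ] (U : Set X) (n : ℕ) :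
    Integrable (openApprox U n) μ :=
  .of_bound (openApprox U n).continuous.aestronglyMeasurable 1 <| .of_forall fun x => by
    simpa [abs_of_nonneg (openApprox_nonneg n x)] using openApprox_le_one n x

lemma integral_openApprox_le [IsFiniteMeasure μ] (hU : IsOpen U) (n : ℕ) :
    ∫ x, openApprox U n x ∂μ ≤ μ.real U := by
  rw [← integral_indicator_one hU.measurableSet]
  exact integral_mono (integrable_openApprox U n)
    ((integrable_const 1).indicator hU.measurableSet) (openApprox_le_indicator n)

lemma monotone_integral_openApprox [IsFiniteMeasure μ] (U : Set X) :
    Monotone fun n => ∫ x, openApprox U n x ∂μ := fun _ _ hmn =>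
  integral_mono (integrable_openApprox U _) (integrable_openApprox U _)
    (monotone_openApprox U hmn)

lemma tendsto_integral_openApprox [IsFiniteMeasure μ] (hU : IsOpen U) :
    Tendsto (fun n => ∫ x, openApprox U n x ∂μ) atTop (𝓝 (μ.real U)) := by
  rw [← integral_indicator_one hU.measurableSet]
  refine tendsto_integral_of_dominated_convergence 1
    (fun n => (openApprox U n).continuous.aestronglyMeasurable) (integrable_const 1)
    (fun n => .of_forall fun x => ?_) (.of_forall (tendsto_openApprox hU))
  simpa [abs_of_nonneg (openApprox_nonneg n x)] using openApprox_le_one n x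

lemma measureReal_add_measureReal_compl_closure [IsProbabilityMeasure μ] {G : Set X}
    (hbd : μ (closure G \ G) = 0) : μ.real G + μ.real (closure G)ᶜ = 1 := by
  rw [measureReal_def, measure_eq_measure_of_null_sdiff subset_closure hbd, ← measureReal_def,
    probReal_add_probReal_compl isClosed_closure.measurableSet]

lemma tendsto_integral_openApprox_add_compl_closure [IsProbabilityMeasure μ] {G : Set X}
    (hG : IsOpen G) (hbd : μ (closure G \ G) = 0) :
    Tendsto (fun n => ∫ x, openApprox G n x ∂μ + ∫ x, openApprox (closure G)ᶜ n x ∂μ) atTop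
      (𝓝 1) := by
  simpa [measureReal_add_measureReal_compl_closure hbd] using
    (tendsto_integral_openApprox (μ := μ) hG).add
      (tendsto_integral_openApprox (μ := μ) (isClosed_closure (s := G)).isOpen_compl)

lemma abs_integral_openApprox_sub_measureReal_lt [IsProbabilityMeasure μ] {G : Set X}
    (hG : IsOpen G) (hbd : μ (closure G \ G) = 0) {n : ℕ} {ε : ℝ}
    (hn : 1 - ε < ∫ x, openApprox G n x ∂μ + ∫ x, openApprox (closure G)ᶜ n x ∂μ) :
    |∫ x, openApprox G n x ∂μ - μ.real G| < ε := by
  have hG_le := integral_openApprox_le (μ := μ) hG n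
  have hGc_le := integral_openApprox_le (μ := μ) (isClosed_closure (s := G)).isOpen_compl n
  have hsum := measureReal_add_measureReal_compl_closure hbd
  rw [abs_of_nonpos (by linarith)]
  linarith

end Measure

theorem stmt5_general {X : Type*} [MetricSpace X] [MeasurableSpace X] [BorelSpace X]
    {A : Type*} [NormedRing A] [StarRing A] [CStarRing A] [NormedAlgebra ℂ A] [CompleteSpace A]
    [StarModule ℂ A]
    (φ : C(X, ℂ) →⋆ₐ[ℂ] A)
    (μt : (A →L[ℂ] ℂ) → Measure X)
    (hrep : ∀ τ : A →L[ℂ] ℂ, IsTracialState τ → IsProbabilityMeasure (μt τ) ∧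
      ∀ f : C(X, ℂ), τ (φ f) = ∫ x, f x ∂(μt τ))
    (G : Set X) (hG : IsOpen G)
    (hbd : ∀ τ : A →L[ℂ] ℂ, IsTracialState τ → μt τ (closure G \ G) = 0) :
    ∀ ε : ℝ, 0 < ε → ∃ g : C(X, ℂ),
      (∀ x, (g x).im = 0 ∧ 0 ≤ (g x).re ∧ (g x).re ≤ 1) ∧
      (∀ x, x ∉ G → g x = 0) ∧
      ∀ τ : A →L[ℂ] ℂ, IsTracialState τ →
        ‖τ (φ g) - ((μt τ) G).toReal‖ < ε := by
  intro ε hε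
  let : CStarAlgebra A := { }
  let : PartialOrder A := CStarAlgebra.spectralOrder A
  let : StarOrderedRing A := CStarAlgebra.spectralOrderedRing A
  let ofReal : C(X, ℝ) → C(X, ℂ) := (ContinuousMap.mk Complex.ofReal Complex.continuous_ofReal).comp
  have hval (τ : A →L[ℂ] ℂ) (hτ : IsTracialState τ) (f : C(X, ℝ)) :
      τ (φ (ofReal f)) = ((∫ x, f x ∂μt τ : ℝ) : ℂ) :=
    ((hrep τ hτ).2 _).trans integral_ofReal
  have hre (τ : A →L[ℂ] ℂ) (hτ : IsTracialState τ) (n : ℕ) :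
      (τ (φ (ofReal (openApprox G n)) + φ (ofReal (openApprox (closure G)ᶜ n)))).re =
        ∫ x, openApprox G n x ∂μt τ + ∫ x, openApprox (closure G)ᶜ n x ∂μt τ := by
    simp only [map_add, hval τ hτ, Complex.add_re, Complex.ofReal_re]
  obtain ⟨N, hN⟩ := exists_forall_isTracialState_lt_re_apply (c := 1)
    (fun n => φ (ofReal (openApprox G n)) + φ (ofReal (openApprox (closure G)ᶜ n)))
    (fun τ hτ => by
      have := (hrep τ hτ).1
      simpa only [hre τ hτ] using
        (monotone_integral_openApprox (μ := μt τ) G).add (monotone_integral_openApprox _))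
    (fun τ hτ => by
      have := (hrep τ hτ).1
      simpa only [hre τ hτ] using tendsto_integral_openApprox_add_compl_closure hG (hbd τ hτ))
    hε
  refine ⟨ofReal (openApprox G N), fun x => ?_, fun x hx => ?_, fun τ hτ => ?_⟩
  · simp [ofReal, openApprox_nonneg, openApprox_le_one]
  · simp [ofReal, openApprox_eq_zero_of_notMem hx]
  · have := (hrep τ hτ).1
    rw [hval τ hτ, ← measureReal_def, ← Complex.ofReal_sub, Complex.norm_real, Real.norm_eq_abs]
    exact abs_integral_openApprox_sub_measureReal_lt hG (hbd τ hτ) (hre τ hτ N ▸ hN τ hτ)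

theorem stmt5 {X : Type*} [MetricSpace X] [CompactSpace X] [MeasurableSpace X] [BorelSpace X]
    {A : Type*} [NormedRing A] [StarRing A] [CStarRing A] [NormedAlgebra ℂ A] [CompleteSpace A]
    [StarModule ℂ A]
    (φ : C(X, ℂ) →⋆ₐ[ℂ] A) (hinj : Function.Injective φ)
    (μt : (A →L[ℂ] ℂ) → Measure X)
    (hrep : ∀ τ : A →L[ℂ] ℂ, IsTracialState τ → IsProbabilityMeasure (μt τ) ∧
      ∀ f : C(X, ℂ), τ (φ f) = ∫ x, f x ∂(μt τ))
    (G : Set X) (hG : IsOpen G)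
    (hbd : ∀ τ : A →L[ℂ] ℂ, IsTracialState τ → μt τ (closure G \ G) = 0) :
    ∀ ε : ℝ, 0 < ε → ∃ g : C(X, ℂ),
      (∀ x, (g x).im = 0 ∧ 0 ≤ (g x).re ∧ (g x).re ≤ 1) ∧
      (∀ x, x ∉ G → g x = 0) ∧
      ∀ τ : A →L[ℂ] ℂ, IsTracialState τ →
        ‖τ (φ g) - ((μt τ) G).toReal‖ < ε :=
  stmt5_general φ μt hrep G hG hbd
end

section
/- Let X be a compact metric space, α : X → X a homeomorphism, and μ an α-invariant Borel probability measure. Suppose G₁, ..., G_m are open sets and h(1), ..., h(m) ≥ N are integers such that the sets α^j(G_i) for 0 ≤ j ≤ h(i)−1 are pairwise disjoint and μ(X \ ⋃_{i,j} α^j(G_i)) = 0. Write h(i) = L(i)·n + r(i) with 0 ≤ r(i) < n and N = nK. Then the set G = ⋃_i ⋃_{s=0}^{L(i)−1} α^{sn}(G_i) satisfies: α^j(G), 0 ≤ j ≤ n−1, are pairwise disjoint, and μ(⋃_{j=0}^{n−1} α^j(G)) > 1 − 1/K. -/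
/-!
The sets `α^[j] '' G`, `j < n`, are exactly the levels of index below `L i * n` of the towers over
the `G_i`, and they are disjoint because such a level index `j + s * n` determines `j` as its
residue mod `n`. What they miss is, up to a null set, the top `r i < n` levels of each tower, of
measure `∑ r i * μ (G_i) < ∑ n * μ (G_i) ≤ (1 / K) * ∑ h i * μ (G_i) = 1 / K`; the first
inequality is strict because the bases cannot all be null when the towers fill up `X`.
-/

open MeasureTheory Finset
open scoped ENNReal

theorem MeasurableEmbedding.iterate {X : Type*} [MeasurableSpace X] {f : X → X}
    (hf : MeasurableEmbedding f) : ∀ n, MeasurableEmbedding f^[n]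
  | 0 => .id
  | n + 1 => (MeasurableEmbedding.iterate hf n).comp hf

namespace MeasureTheory.MeasurePreserving

variable {X Y : Type*} [MeasurableSpace X] [MeasurableSpace Y] {μ : Measure X} {ν : Measure Y}

theorem measure_image_emb {f : X → Y} (hμ : MeasurePreserving f μ ν)
    (hf : MeasurableEmbedding f) (s : Set X) : ν (f '' s) = μ s := by
  rw [← hμ.measure_preimage_emb hf, hf.injective.preimage_image]

theorem measure_iterate_image {f : X → X} (hμ : MeasurePreserving f μ μ)
    (hf : MeasurableEmbedding f) (n : ℕ) (s : Set X) : μ (f^[n] '' s) = μ s :=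
  (hμ.iterate n).measure_image_emb (hf.iterate n) s

end MeasureTheory.MeasurePreserving

section Towers

variable {X ι : Type*} (f : X → X) (B : ι → Set X)

def towerUnion (h : ι → ℕ) : Set X := ⋃ i, ⋃ j < h i, f^[j] '' B i

def TowerLevelsPairwiseDisjoint (h : ι → ℕ) : Prop :=
  ∀ (i j : ι) (s t : ℕ), s < h i → t < h j → (i ≠ j ∨ s ≠ t) →
    Disjoint (f^[s] '' B i) (f^[t] '' B j)

def regroupBase (L : ι → ℕ) (n : ℕ) : Set X := ⋃ i, ⋃ k < L i, f^[k * n] '' B i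

variable {f B}

theorem disjoint_iterate_image_regroupBase {h L : ι → ℕ} {n s t : ℕ}
    (hdisj : TowerLevelsPairwiseDisjoint f B h) (hL : ∀ i, L i * n ≤ h i)
    (hs : s < n) (ht : t < n) (hst : s ≠ t) :
    Disjoint (f^[s] '' regroupBase f B L n) (f^[t] '' regroupBase f B L n) := by
  simp only [regroupBase, Set.image_iUnion, Set.disjoint_iUnion_left, Set.disjoint_iUnion_right]
  intro j l hl i k hk
  rw [← Set.image_comp, ← Set.image_comp, ← Function.iterate_add, ← Function.iterate_add]
  have level_lt {i k j} (hk : k < L i) (hj : j < n) : j + k * n < h i := by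
    rw [mul_comm]
    exact (Nat.add_mul_lt_mul_of_lt_of_lt hj hk).trans_le (mul_comm n (L i) ▸ hL i)
  refine hdisj i j _ _ (level_lt hk hs) (level_lt hl ht) (Or.inr fun heq => hst ?_)
  simpa [Nat.add_mul_mod_self_right, Nat.mod_eq_of_lt hs, Nat.mod_eq_of_lt ht] using
    congrArg (· % n) heq

theorem iUnion_iterate_image_regroupBase (L : ι → ℕ) (n : ℕ) :
    ⋃ j < n, f^[j] '' regroupBase f B L n = towerUnion f B (fun i => L i * n) := by
  ext x
  simp only [regroupBase, towerUnion, Set.image_iUnion, ← Set.image_comp,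
    ← Function.iterate_add, Set.mem_iUnion]
  constructor
  · rintro ⟨j, hj, i, k, hk, hx⟩
    refine ⟨i, j + k * n, ?_, hx⟩
    rw [mul_comm k, mul_comm (L i)]
    exact Nat.add_mul_lt_mul_of_lt_of_lt hj hk
  · rintro ⟨i, t, ht, hx⟩
    have hn : 0 < n := Nat.pos_of_mul_pos_left (t.zero_le.trans_lt ht)
    refine ⟨t % n, Nat.mod_lt t hn, i, t / n, Nat.div_lt_of_lt_mul (by rwa [mul_comm]), ?_⟩
    rwa [Nat.mod_add_div' t n]

theorem towerUnion_subset_union_remainder {h L r : ι → ℕ} {n : ℕ}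
    (hhLr : ∀ i, h i = L i * n + r i) :
    towerUnion f B h ⊆
      towerUnion f B (fun i => L i * n) ∪ towerUnion f (fun i => f^[L i * n] '' B i) r := by
  intro x hx
  simp only [towerUnion, Set.mem_union, Set.mem_iUnion] at hx ⊢
  obtain ⟨i, t, ht, hx⟩ := hx
  by_cases hlow : t < L i * n
  · exact Or.inl ⟨i, t, hlow, hx⟩
  · refine Or.inr ⟨i, t - L i * n, by have := hhLr i; omega, ?_⟩
    rwa [← Set.image_comp, ← Function.iterate_add, Nat.sub_add_cancel (not_lt.1 hlow)]

theorem towerUnion_eq_biUnion_sigma [Fintype ι] (h : ι → ℕ) :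
    towerUnion f B h = ⋃ p ∈ univ.sigma (fun i => range (h i)), f^[p.2] '' B p.1 := by
  ext x
  simp only [towerUnion, Set.mem_iUnion, mem_sigma, mem_univ, mem_range, true_and, Sigma.exists,
    exists_prop]

variable [MeasurableSpace X] {μ : Measure X} [Fintype ι]

theorem measure_towerUnion_le (hμ : MeasurePreserving f μ μ) (hf : MeasurableEmbedding f)
    (h : ι → ℕ) : μ (towerUnion f B h) ≤ ∑ i, h i * μ (B i) := by
  rw [towerUnion_eq_biUnion_sigma]
  refine (measure_biUnion_finset_le _ _).trans_eq ?_
  simp [sum_sigma, hμ.measure_iterate_image hf]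

theorem measure_towerUnion (hμ : MeasurePreserving f μ μ) (hf : MeasurableEmbedding f)
    (hB : ∀ i, MeasurableSet (B i)) {h : ι → ℕ} (hdisj : TowerLevelsPairwiseDisjoint f B h) :
    μ (towerUnion f B h) = ∑ i, h i * μ (B i) := by
  rw [towerUnion_eq_biUnion_sigma, measure_biUnion_finset]
  · simp [sum_sigma, hμ.measure_iterate_image hf]
  · rintro ⟨i, s⟩ hs ⟨j, t⟩ ht hne
    simp only [coe_sigma, Set.mem_sigma_iff, mem_coe, mem_range] at hs ht
    refine hdisj i j s t hs.2 ht.2 ?_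
    by_contra! heq
    obtain ⟨rfl, rfl⟩ := heq
    exact hne rfl
  · exact fun p _ => (hf.iterate p.2).measurableSet_image' (hB p.1)

end Towers

theorem ENNReal.sum_mul_lt_one_div {ι : Type*} (s : Finset ι) (a : ι → ℝ≥0∞)
    {h r : ι → ℕ} {n K : ℕ} (hK : 0 < K) (hr : ∀ i, r i < n) (hN : ∀ i, n * K ≤ h i)
    (hsum : ∑ i ∈ s, h i * a i = 1) : ∑ i ∈ s, r i * a i < 1 / K := by
  have hpos : ∑ i ∈ s, a i ≠ 0 := by
    intro h0
    rw [sum_eq_zero_iff] at h0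
    rw [sum_eq_zero fun i hi => by rw [h0 i hi, mul_zero]] at hsum
    exact zero_ne_one hsum
  have hfin : ∑ i ∈ s, r i * a i ≠ ∞ := by
    refine ne_top_of_le_ne_top (hsum ▸ one_ne_top) (sum_le_sum fun i _ => ?_)
    gcongr
    exact (hr i).le.trans ((Nat.le_mul_of_pos_right n hK).trans (hN i))
  calc ∑ i ∈ s, r i * a i < ∑ i ∈ s, r i * a i + ∑ i ∈ s, a i :=
        ENNReal.lt_add_right hfin hpos
    _ = ∑ i ∈ s, ((r i + 1 : ℕ) : ℝ≥0∞) * a i := by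
        simp only [← sum_add_distrib, Nat.cast_succ, add_mul, one_mul]
    _ ≤ ∑ i ∈ s, n * a i := by gcongr with i; exact hr i
    _ ≤ 1 / K := by
        rw [ENNReal.le_div_iff_mul_le (.inl (Nat.cast_ne_zero.2 hK.ne')) (.inl (natCast_ne_top K)),
          sum_mul, ← hsum]
        refine sum_le_sum fun i _ => ?_
        rw [mul_right_comm, ← Nat.cast_mul]
        gcongr
        exact hN i

section Regrouping

variable {X ι : Type*} [MeasurableSpace X] {μ : Measure X} [IsProbabilityMeasure μ] [Fintype ι]
  {f : X → X} {B : ι → Set X}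

theorem one_sub_one_div_lt_measure_iUnion_iterate_image_regroupBase
    (hμ : MeasurePreserving f μ μ) (hf : MeasurableEmbedding f) (hB : ∀ i, MeasurableSet (B i))
    {h L r : ι → ℕ} {n K : ℕ} (hK : 0 < K) (hhLr : ∀ i, h i = L i * n + r i)
    (hr : ∀ i, r i < n) (hN : ∀ i, n * K ≤ h i) (hdisj : TowerLevelsPairwiseDisjoint f B h)
    (hcover : μ (towerUnion f B h)ᶜ = 0) :
    1 - 1 / (K : ℝ≥0∞) < μ (⋃ j < n, f^[j] '' regroupBase f B L n) := by
  have htower : μ (towerUnion f B h) = 1 := by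
    rw [measure_congr (ae_eq_univ.2 hcover), measure_univ]
  have hsum : ∑ i, h i * μ (B i) = 1 := (measure_towerUnion hμ hf hB hdisj).symm.trans htower
  have hremainder : μ (towerUnion f (fun i => f^[L i * n] '' B i) r) < 1 / K := by
    refine (measure_towerUnion_le hμ hf r).trans_lt ?_
    simpa only [hμ.measure_iterate_image hf] using
      ENNReal.sum_mul_lt_one_div _ _ hK hr hN hsum
  have hK' : 1 / (K : ℝ≥0∞) ≤ 1 :=
    ENNReal.div_le_of_le_mul (by rw [one_mul]; exact Nat.one_le_cast.2 hK)
  rw [iUnion_iterate_image_regroupBase]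
  refine ENNReal.sub_lt_of_lt_add hK' ?_
  calc 1 = μ (towerUnion f B h) := htower.symm
    _ ≤ _ := measure_mono (towerUnion_subset_union_remainder hhLr)
    _ ≤ _ := measure_union_le _ _
    _ < _ := ENNReal.add_lt_add_left (measure_ne_top _ _) hremainder

end Regrouping

theorem stmt11_general {X : Type*} [MetricSpace X] [MeasurableSpace X] [BorelSpace X]
    (α : X ≃ₜ X) (μ : Measure X) [IsProbabilityMeasure μ] (hinv : μ.map ⇑α = μ)
    (m n K : ℕ) (hK : 0 < K)
    (G : Set X)
    (Gt : Fin m → Set X) (hGt : ∀ i, IsOpen (Gt i))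
    (h L r : Fin m → ℕ)
    (hhLr : ∀ i, h i = L i * n + r i) (hr : ∀ i, r i < n)
    (hN : ∀ i, n * K ≤ h i)
    (hdisj : ∀ (i j : Fin m) (s t : ℕ), s < h i → t < h j → (i ≠ j ∨ s ≠ t) →
      Disjoint ((⇑α)^[s] '' Gt i) ((⇑α)^[t] '' Gt j))
    (hcover : μ (⋃ i, ⋃ j < h i, (⇑α)^[j] '' Gt i)ᶜ = 0)
    (hGdef : G = ⋃ i, ⋃ s < L i, (⇑α)^[s * n] '' Gt i) :
    (∀ s t : ℕ, s < n → t < n → s ≠ t →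
      Disjoint ((⇑α)^[s] '' G) ((⇑α)^[t] '' G)) ∧
    1 - 1 / (K : ENNReal) < μ (⋃ j < n, (⇑α)^[j] '' G) := by
  have hμ : MeasurePreserving α μ μ := ⟨α.continuous.measurable, hinv⟩
  have hL : ∀ i, L i * n ≤ h i := fun i => (hhLr i).ge.trans' (Nat.le_add_right _ _)
  subst hGdef
  exact ⟨fun s t hs ht hst => disjoint_iterate_image_regroupBase hdisj hL hs ht hst,
    one_sub_one_div_lt_measure_iUnion_iterate_image_regroupBase hμ α.measurableEmbedding
      (fun i => (hGt i).measurableSet) hK hhLr hr hN hdisj hcover⟩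

theorem stmt11 {X : Type*} [MetricSpace X] [CompactSpace X] [MeasurableSpace X] [BorelSpace X]
    (α : X ≃ₜ X) (μ : Measure X) [IsProbabilityMeasure μ] (hinv : μ.map ⇑α = μ)
    (m n K : ℕ) (hn : 0 < n) (hK : 0 < K)
    (G : Set X)
    (Gt : Fin m → Set X) (hGt : ∀ i, IsOpen (Gt i))
    (h L r : Fin m → ℕ)
    (hhLr : ∀ i, h i = L i * n + r i) (hr : ∀ i, r i < n)
    (hN : ∀ i, n * K ≤ h i)
    (hdisj : ∀ (i j : Fin m) (s t : ℕ), s < h i → t < h j → (i ≠ j ∨ s ≠ t) →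
      Disjoint ((⇑α)^[s] '' Gt i) ((⇑α)^[t] '' Gt j))
    (hcover : μ (⋃ i, ⋃ j < h i, (⇑α)^[j] '' Gt i)ᶜ = 0)
    (hGdef : G = ⋃ i, ⋃ s < L i, (⇑α)^[s * n] '' Gt i) :
    (∀ s t : ℕ, s < n → t < n → s ≠ t →
      Disjoint ((⇑α)^[s] '' G) ((⇑α)^[t] '' G)) ∧
    1 - 1 / (K : ENNReal) < μ (⋃ j < n, (⇑α)^[j] '' G) :=
  stmt11_general α μ hinv m n K hK G Gt hGt h L r hhLr hr hN hdisj hcover hGdef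
end

section
/- Let A, B be unital C*-algebras and u ∈ A a partial isometry with u*u = e and uu* = f projections. Let φ : A → B be a unital linear map such that ‖φ(xy) − φ(x)φ(y)‖ < δ for x, y ∈ {u, u*, e, f}, and let p, q ∈ B be projections with ‖p − φ(u)φ(u)*‖ < δ and ‖q − φ(u)*φ(u)‖ < δ. If δ is sufficiently small (e.g. 5δ < 1), then p and q are Murray–von Neumann equivalent in B; in particular t(p) = t(q) for every tracial state t on B. -/
set_option linter.unusedSectionVars false

section Aux
variable {B : Type*} [NormedRing B] [StarRing B] [CStarRing B] [NormedAlgebra ℂ B] [CompleteSpace B]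

private lemma half_smul_star (z : B) : star ((2⁻¹ : ℝ) • z) = (2⁻¹ : ℝ) • star z := by
  have h2 : ∀ m : B, star ((2 : ℝ) • m) = (2 : ℝ) • star m := by
    intro m
    rw [two_smul, star_add, two_smul]
  calc star ((2⁻¹ : ℝ) • z)
      = (2⁻¹ : ℝ) • ((2 : ℝ) • star ((2⁻¹ : ℝ) • z)) := by
        rw [smul_smul]; norm_num
    _ = (2⁻¹ : ℝ) • star ((2 : ℝ) • (2⁻¹ : ℝ) • z) := by rw [h2]
    _ = (2⁻¹ : ℝ) • star z := by rw [smul_smul]; norm_num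

private theorem sqrt_one_sub (t : B) (hst : star t = t) (hnt : ‖t‖ ≤ 3/4) :
    ∃ w : B, star w = w ∧ w * w = 1 - t ∧ ‖1 - w‖ ≤ 1/2 ∧
      ∀ z : B, z * t = t * z → z * w = w * z := by
  let y : ℕ → B := fun n => Nat.rec 0 (fun _ yn => (2⁻¹ : ℝ) • (t + yn * yn)) n
  have hy0 : y 0 = 0 := rfl
  have hystep : ∀ n, y (n+1) = (2⁻¹ : ℝ) • (t + y n * y n) := fun n => rfl
  have hynorm : ∀ n, ‖y n‖ ≤ 1/2 := by
    intro n
    induction n with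
    | zero => simp [hy0]
    | succ n ih =>
      rw [hystep, norm_smul]
      have h1 : ‖t + y n * y n‖ ≤ 1 := by
        calc ‖t + y n * y n‖ ≤ ‖t‖ + ‖y n‖ * ‖y n‖ :=
              (norm_add_le _ _).trans (by gcongr; exact norm_mul_le _ _)
          _ ≤ 3/4 + (1/2) * (1/2) := by gcongr
          _ ≤ 1 := by norm_num
      have : ‖(2⁻¹ : ℝ)‖ = 2⁻¹ := by norm_num
      rw [this]
      nlinarith [norm_nonneg (t + y n * y n)]
  have hystar : ∀ n, star (y n) = y n := by
    intro n
    induction n with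
    | zero => simp [hy0]
    | succ n ih =>
      rw [hystep, half_smul_star, star_add, star_mul, ih, hst]
  have hycomm : ∀ z : B, z * t = t * z → ∀ n, z * y n = y n * z := by
    intro z hz n
    induction n with
    | zero => simp [hy0]
    | succ n ih =>
      rw [hystep, mul_smul_comm, smul_mul_assoc, mul_add, add_mul, hz,
        show z * (y n * y n) = y n * y n * z by
          rw [← mul_assoc, ih, mul_assoc, ih, mul_assoc]]
  have hdiff : ∀ n, ‖y (n+1) - y n‖ ≤ (3/8) * (1/2)^n := by
    intro n
    induction n with
    | zero =>
      simp only [hystep, hy0, mul_zero, add_zero, sub_zero, pow_zero, mul_one, norm_smul]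
      have : ‖(2⁻¹ : ℝ)‖ = 2⁻¹ := by norm_num
      rw [this]
      linarith
    | succ n ih =>
      have key : y (n+2) - y (n+1) =
          (2⁻¹ : ℝ) • (y (n+1) * (y (n+1) - y n) + (y (n+1) - y n) * y n) := by
        calc y (n+2) - y (n+1)
            = (2⁻¹ : ℝ) • (t + y (n+1) * y (n+1)) - (2⁻¹ : ℝ) • (t + y n * y n) := by
              rw [← hystep n, ← hystep (n+1)]
          _ = (2⁻¹ : ℝ) • ((t + y (n+1) * y (n+1)) - (t + y n * y n)) := (smul_sub _ _ _).symm
          _ = (2⁻¹ : ℝ) • (y (n+1) * (y (n+1) - y n) + (y (n+1) - y n) * y n) := by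
              congr 1; noncomm_ring
      rw [key, norm_smul, show ‖(2⁻¹ : ℝ)‖ = 2⁻¹ by norm_num, pow_succ]
      nlinarith [norm_add_le (y (n+1) * (y (n+1) - y n)) ((y (n+1) - y n) * y n),
        norm_mul_le (y (n+1)) (y (n+1) - y n), norm_mul_le (y (n+1) - y n) (y n),
        mul_le_mul_of_nonneg_right (hynorm (n+1)) (norm_nonneg (y (n+1) - y n)),
        mul_le_mul_of_nonneg_left (hynorm n) (norm_nonneg (y (n+1) - y n)),
        ih, norm_nonneg (y (n+1) - y n), pow_nonneg (by norm_num : (0:ℝ) ≤ 1/2) n]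
  have hcauchy : CauchySeq y := by
    apply cauchySeq_of_le_geometric (1/2) (3/8) (by norm_num)
    intro n
    rw [dist_eq_norm, norm_sub_rev]
    exact hdiff n
  obtain ⟨L, hL⟩ := cauchySeq_tendsto_of_complete hcauchy
  have hL1 : Filter.Tendsto (fun n => y (n+1)) Filter.atTop (nhds L) :=
    hL.comp (Filter.tendsto_add_atTop_nat 1)
  have hL2 : Filter.Tendsto (fun n => (2⁻¹ : ℝ) • (t + y n * y n)) Filter.atTop
      (nhds ((2⁻¹ : ℝ) • (t + L * L))) :=
    ((tendsto_const_nhds.add (hL.mul hL)).const_smul _)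
  have hLeq : L = (2⁻¹ : ℝ) • (t + L * L) := by
    apply tendsto_nhds_unique hL1
    simpa only [← hystep] using hL2
  have hLstar : star L = L := by
    have h1 : Filter.Tendsto (fun n => star (y n)) Filter.atTop (nhds (star L)) :=
      hL.star
    have h2 : (fun n => star (y n)) = y := funext hystar
    rw [h2] at h1
    exact tendsto_nhds_unique h1 hL
  have hLnorm : ‖L‖ ≤ 1/2 := le_of_tendsto' hL.norm hynorm
  have hLcomm : ∀ z : B, z * t = t * z → z * L = L * z := by
    intro z hz
    have h1 : Filter.Tendsto (fun n => z * y n) Filter.atTop (nhds (z * L)) :=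
      Filter.Tendsto.const_mul z hL
    have h2 : Filter.Tendsto (fun n => y n * z) Filter.atTop (nhds (L * z)) :=
      hL.mul_const z
    have h3 : (fun n => z * y n) = fun n => y n * z := funext (hycomm z hz)
    rw [h3] at h1
    exact tendsto_nhds_unique h1 h2
  have h2L : L + L = t + L * L := by
    calc L + L = (2⁻¹ : ℝ) • (t + L * L) + (2⁻¹ : ℝ) • (t + L * L) := by rw [← hLeq]
      _ = ((2⁻¹ : ℝ) + 2⁻¹) • (t + L * L) := (add_smul _ _ _).symm
      _ = t + L * L := by norm_num
  refine ⟨1 - L, ?_, ?_, ?_, ?_⟩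
  · rw [star_sub, star_one, hLstar]
  · have : (1 - L) * (1 - L) = 1 - (L + L) + L * L := by noncomm_ring
    rw [this, h2L]
    noncomm_ring
  · rw [sub_sub_cancel]; exact hLnorm
  · intro z hz
    have := hLcomm z hz
    rw [mul_sub, sub_mul, mul_one, one_mul, this]

private lemma norm_proj_le_one {q : B} (hq : star q = q) (hq2 : q * q = q) : ‖q‖ ≤ 1 := by
  have h := CStarRing.norm_star_mul_self (x := q)
  rw [hq, hq2] at h
  nlinarith [norm_nonneg q]

private lemma proj_bound (a p q : B) (δ : ℝ)
    (hpsa : star p = p) (hqsa : star q = q) (hpidem : p * p = p) (hqidem : q * q = q)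
    (h1 : ‖p - a * star a‖ < δ) (h2 : ‖q - star a * a‖ < δ) (hδ : δ < 1/5) :
    ‖star (p * a * q) * (p * a * q) - q‖ ≤ 3/4 := by
  have hδ0 : 0 ≤ δ := le_trans (norm_nonneg _) h2.le
  have hq1 : ‖q‖ ≤ 1 := norm_proj_le_one hqsa hqidem
  have hna : ‖a‖ * ‖a‖ ≤ 1 + δ := by
    have h3 : ‖star a * a‖ = ‖a‖ * ‖a‖ := CStarRing.norm_star_mul_self
    have h4 : ‖star a * a‖ ≤ ‖q‖ + ‖q - star a * a‖ := by
      calc ‖star a * a‖ = ‖q - (q - star a * a)‖ := by congr 1; abel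
        _ ≤ ‖q‖ + ‖q - star a * a‖ := norm_sub_le _ _
    nlinarith
  have hsx : star (p * a * q) = q * star a * p := by
    simp only [star_mul, hpsa, hqsa, mul_assoc]
  have step1 : star (p * a * q) * (p * a * q) = q * (star a * p * a) * q := by
    rw [hsx]
    calc q * star a * p * (p * a * q)
        = q * star a * ((p * p) * (a * q)) := by noncomm_ring
      _ = q * star a * (p * (a * q)) := by rw [hpidem]
      _ = q * (star a * p * a) * q := by noncomm_ring
  have step2 : q * (star a * p * a) * q - q = q * (star a * p * a - q) * q := by
    have h5 : q * (star a * p * a - q) * q = q * (star a * p * a) * q - q * q * q := by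
      noncomm_ring
    rw [h5, hqidem, hqidem]
  have hinner : star a * p * a - q =
      star a * (p - a * star a) * a +
        ((star a * a) * (star a * a - q) + (star a * a - q) * q + (q * q - q)) := by
    noncomm_ring
  have hn1 : ‖star a * (p - a * star a) * a‖ ≤ ‖a‖ * ‖p - a * star a‖ * ‖a‖ := by
    calc ‖star a * (p - a * star a) * a‖ ≤ ‖star a * (p - a * star a)‖ * ‖a‖ := norm_mul_le _ _
      _ ≤ ‖star a‖ * ‖p - a * star a‖ * ‖a‖ := by gcongr; exact norm_mul_le _ _
      _ = ‖a‖ * ‖p - a * star a‖ * ‖a‖ := by rw [norm_star]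
  have hb1 : ‖star a * a‖ ≤ 1 + δ := by rw [CStarRing.norm_star_mul_self]; exact hna
  have hb2 : ‖star a * a - q‖ ≤ δ := by rw [norm_sub_rev]; exact h2.le
  have hinnernorm : ‖star a * p * a - q‖ ≤ ‖a‖ * δ * ‖a‖ + ((1 + δ) * δ + δ * 1) := by
    rw [hinner, hqidem, sub_self, add_zero]
    have N := norm_add_le (star a * (p - a * star a) * a)
      ((star a * a) * (star a * a - q) + (star a * a - q) * q)
    have N2 := norm_add_le ((star a * a) * (star a * a - q)) ((star a * a - q) * q)
    have M2 := norm_mul_le (star a * a) (star a * a - q)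
    have M3 := norm_mul_le (star a * a - q) q
    nlinarith [mul_le_mul_of_nonneg_right
        (mul_le_mul_of_nonneg_left h1.le (norm_nonneg a)) (norm_nonneg a),
      mul_le_mul hb1 hb2 (norm_nonneg _) (by positivity : (0:ℝ) ≤ 1 + δ),
      mul_le_mul hb2 hq1 (norm_nonneg q) hδ0,
      norm_nonneg (p - a * star a), norm_nonneg a]
  have hfinal : ‖star (p * a * q) * (p * a * q) - q‖ ≤ ‖star a * p * a - q‖ := by
    rw [step1, step2]
    have K1 := norm_mul_le (q * (star a * p * a - q)) q
    have K2 := norm_mul_le q (star a * p * a - q)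
    nlinarith [norm_nonneg q, norm_nonneg (star a * p * a - q),
      mul_le_mul_of_nonneg_right K2 (norm_nonneg q),
      mul_le_mul_of_nonneg_right
        (mul_le_mul_of_nonneg_right hq1 (norm_nonneg (star a * p * a - q))) (norm_nonneg q),
      mul_le_mul_of_nonneg_left hq1 (norm_nonneg (star a * p * a - q))]
  calc ‖star (p * a * q) * (p * a * q) - q‖ ≤ ‖a‖ * δ * ‖a‖ + ((1 + δ) * δ + δ * 1) :=
        hfinal.trans hinnernorm
    _ ≤ 3/4 := by nlinarith [mul_le_mul_of_nonneg_right hna hδ0]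

end Aux

theorem stmt16 {A B : Type*}
    [NormedRing A] [StarRing A] [CStarRing A] [NormedAlgebra ℂ A] [CompleteSpace A]
    [NormedRing B] [StarRing B] [CStarRing B] [NormedAlgebra ℂ B] [CompleteSpace B]
    (u e f : A) (hue : star u * u = e) (huf : u * star u = f)
    (he : IsSelfAdjoint e ∧ e * e = e) (hf : IsSelfAdjoint f ∧ f * f = f)
    (φ : A →ₗ[ℂ] B) (hφ1 : φ 1 = 1) (δ : ℝ)
    (hmult : ∀ x ∈ ({u, star u, e, f} : Set A), ∀ y ∈ ({u, star u, e, f} : Set A),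
      ‖φ (x * y) - φ x * φ y‖ < δ)
    (p q : B) (hpsa : IsSelfAdjoint p) (hpidem : p * p = p)
    (hqsa : IsSelfAdjoint q) (hqidem : q * q = q)
    (hpd : ‖p - φ u * star (φ u)‖ < δ) (hqd : ‖q - star (φ u) * φ u‖ < δ)
    (hδ : 5 * δ < 1) :
    (∃ v : B, star v * v = q ∧ v * star v = p) ∧
    ∀ t : B →ₗ[ℂ] ℂ, (∀ x y : B, t (x * y) = t (y * x)) → t p = t q := by
  have hδ5 : δ < 1/5 := by linarith
  have hpsa' : star p = p := hpsa.star_eq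
  have hqsa' : star q = q := hqsa.star_eq
  set a := φ u with ha
  set x := p * a * q with hx
  -- norm bounds
  have hb1 : ‖star x * x - q‖ ≤ 3/4 := by
    have h := proj_bound a p q δ hpsa' hqsa' hpidem hqidem hpd hqd hδ5
    rwa [← hx] at h
  have hxstar : star x = q * star a * p := by
    rw [hx]
    simp only [star_mul, hpsa', hqsa', mul_assoc]
  have hb2 : ‖x * star x - p‖ ≤ 3/4 := by
    have h := proj_bound (star a) q p δ hqsa' hpsa' hqidem hpidem
      (by rw [star_star]; exact hqd) (by rw [star_star]; exact hpd) hδ5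
    rw [← hxstar, star_star] at h
    exact h
  -- multiplicative facts
  have hxq : x * q = x := by rw [hx, mul_assoc, hqidem]
  have hpx : p * x = x := by rw [hx, ← mul_assoc, ← mul_assoc, hpidem]
  have hqsx : q * star x = star x := by rw [hxstar, ← mul_assoc, ← mul_assoc, hqidem]
  have hsxp : star x * p = star x := by rw [hxstar, mul_assoc, hpidem]
  -- square root on the q side
  have hts : star (q - star x * x) = q - star x * x := by
    rw [star_sub, hqsa', star_mul, star_star]
  have htn : ‖q - star x * x‖ ≤ 3/4 := by rw [norm_sub_rev]; exact hb1
  obtain ⟨w, hws, hww, hwn, hwcomm⟩ := sqrt_one_sub _ hts htn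
  have hqt : q * (q - star x * x) = (q - star x * x) * q := by
    rw [mul_sub, sub_mul, hqidem]
    congr 1
    rw [← mul_assoc, hqsx, mul_assoc, hxq]
  have hqw : q * w = w * q := hwcomm q hqt
  have hwn1 : ‖(1:B) - w‖ < 1 := lt_of_le_of_lt hwn (by norm_num)
  set W : Bˣ := Units.oneSub ((1:B) - w) hwn1 with hW
  have hWv : (W : B) = w := by
    show (1:B) - ((1:B) - w) = w
    rw [sub_sub_cancel]
  set c : B := (↑W⁻¹ : B) with hc
  have hcw : c * w = 1 := by rw [hc, ← hWv]; exact W.inv_mul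
  have hwc : w * c = 1 := by rw [hc, ← hWv]; exact W.mul_inv
  have hcq : q * c = c * q := by
    calc q * c = (c * w) * (q * c) := by rw [hcw, one_mul]
      _ = c * ((w * q) * c) := by simp only [mul_assoc]
      _ = c * ((q * w) * c) := by rw [hqw]
      _ = (c * q) * (w * c) := by simp only [mul_assoc]
      _ = c * q := by rw [hwc, mul_one]
  have hcs : star c = c := by
    have h1 : star c * w = 1 := by
      have h0 := congrArg star hwc
      rw [star_mul, hws, star_one] at h0
      exact h0
    calc star c = star c * (w * c) := by rw [hwc, mul_one]
      _ = (star c * w) * c := by rw [mul_assoc]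
      _ = c := by rw [h1, one_mul]
  have hsxq2 : star x * x * q = star x * x := by
    calc star x * x * q = star x * (x * q) := mul_assoc (star x) x q
      _ = star x * x := by rw [hxq]
  have hsxxq : star x * x = (w * w) * q := by
    rw [hww, sub_mul, one_mul, sub_mul, hqidem, hsxq2]
    abel
  -- square root on the p side
  have hts' : star (p - x * star x) = p - x * star x := by
    rw [star_sub, hpsa', star_mul, star_star]
  have htn' : ‖p - x * star x‖ ≤ 3/4 := by rw [norm_sub_rev]; exact hb2
  obtain ⟨w', hws', hww', hwn', hwcomm'⟩ := sqrt_one_sub _ hts' htn'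
  have hwn1' : ‖(1:B) - w'‖ < 1 := lt_of_le_of_lt hwn' (by norm_num)
  set W' : Bˣ := Units.oneSub ((1:B) - w') hwn1' with hW'
  have hWv' : (W' : B) = w' := by
    show (1:B) - ((1:B) - w') = w'
    rw [sub_sub_cancel]
  set c' : B := (↑W'⁻¹ : B) with hc'
  have hcw' : c' * w' = 1 := by rw [hc', ← hWv']; exact W'.inv_mul
  have hwc' : w' * c' = 1 := by rw [hc', ← hWv']; exact W'.mul_inv
  have hxsp2 : x * star x * p = x * star x := by
    calc x * star x * p = x * (star x * p) := mul_assoc x (star x) p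
      _ = x * star x := by rw [hsxp]
  have hxs'p : x * star x = (w' * w') * p := by
    rw [hww', sub_mul, one_mul, sub_mul, hpidem, hxsp2]
    abel
  have hxww : x * (w * w) = (w' * w') * x := by
    have L : x * ((1:B) - (q - star x * x)) = x - x * q + x * star x * x := by noncomm_ring
    have R : ((1:B) - (p - x * star x)) * x = x - p * x + x * star x * x := by noncomm_ring
    rw [hww, hww', L, R, hxq, hpx]
  have h1' : (c' * c') * (w' * w') = 1 := by
    calc (c' * c') * (w' * w') = c' * ((c' * w') * w') := by simp only [mul_assoc]
      _ = c' * (1 * w') := by rw [hcw']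
      _ = 1 := by rw [one_mul, hcw']
  have h2' : (w * w) * (c * c) = 1 := by
    calc (w * w) * (c * c) = w * ((w * c) * c) := by simp only [mul_assoc]
      _ = w * (1 * c) := by rw [hwc]
      _ = 1 := by rw [one_mul, hwc]
  have hxcc : x * (c * c) = (c' * c') * x := by
    calc x * (c * c) = ((c' * c') * (w' * w')) * (x * (c * c)) := by rw [h1', one_mul]
      _ = (c' * c') * (((w' * w') * x) * (c * c)) := by simp only [mul_assoc]
      _ = (c' * c') * ((x * (w * w)) * (c * c)) := by rw [← hxww]
      _ = (c' * c') * (x * ((w * w) * (c * c))) := by simp only [mul_assoc]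
      _ = (c' * c') * (x * 1) := by rw [h2']
      _ = (c' * c') * x := by rw [mul_one]
  have hvq : star (x * c) * (x * c) = q := by
    rw [star_mul, hcs]
    calc c * star x * (x * c) = c * ((star x * x) * c) := by simp only [mul_assoc]
      _ = c * (((w * w) * q) * c) := by rw [hsxxq]
      _ = c * (w * (w * (q * c))) := by simp only [mul_assoc]
      _ = c * (w * (w * (c * q))) := by rw [hcq]
      _ = (c * w) * ((w * c) * q) := by simp only [mul_assoc]
      _ = q := by rw [hcw, hwc, one_mul, one_mul]
  have hvp : (x * c) * star (x * c) = p := by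
    rw [star_mul, hcs]
    calc x * c * (c * star x) = (x * (c * c)) * star x := by simp only [mul_assoc]
      _ = ((c' * c') * x) * star x := by rw [hxcc]
      _ = (c' * c') * (x * star x) := by simp only [mul_assoc]
      _ = (c' * c') * ((w' * w') * p) := by rw [hxs'p]
      _ = ((c' * c') * (w' * w')) * p := by simp only [mul_assoc]
      _ = p := by rw [h1', one_mul]
  refine ⟨⟨x * c, hvq, hvp⟩, ?_⟩
  intro t ht
  calc t p = t ((x * c) * star (x * c)) := by rw [hvp]
    _ = t (star (x * c) * (x * c)) := ht _ _
    _ = t q := by rw [hvq]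
end
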